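/- arXiv:1204.5803 — 2 statements merged into one kernel-verified Lean document; each statement's English description precedes it below -/
import Mathlib

section
/- Let G be a finite abelian group equipped with a bilinear pairing e : G × G → ℚ/ℤ which is alternating (e(x,x) = 0 for all x) and nondegenerate (the induced map G → Hom(G, ℚ/ℤ) is injective). Then the cardinality of G is a perfect square. -/
lemma qz_torsion_mem {n : ℕ} (hn : 0 < n) {z : AddCircle (1 : ℚ)} (hz : n • z = 0) :
    ∃ k : ℤ, z = k • ((((n : ℚ)⁻¹ : ℚ)) : AddCircle (1 : ℚ)) := by
  induction z using QuotientAddGroup.induction_on with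
  | H q =>
    rw [← AddCircle.coe_nsmul, AddCircle.coe_eq_zero_iff] at hz
    obtain ⟨k, hk⟩ := hz
    refine ⟨k, ?_⟩
    rw [← AddCircle.coe_zsmul]
    congr 1
    have hn' : (n : ℚ) ≠ 0 := by exact_mod_cast hn.ne'
    have hk' : (k : ℚ) = n * q := by
      simpa [zsmul_eq_mul, nsmul_eq_mul] using hk
    rw [zsmul_eq_mul, hk']
    field_simp

lemma qz_w_order {n : ℕ} (hn : 0 < n) :
    addOrderOf ((((n : ℚ)⁻¹ : ℚ)) : AddCircle (1 : ℚ)) = n := by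
  haveI : Fact ((0:ℚ) < 1) := ⟨one_pos⟩
  have := AddCircle.addOrderOf_div_of_gcd_eq_one (p := (1:ℚ)) (m := 1) (n := n) hn
    (Nat.gcd_one_left n)
  simpa [one_div] using this

lemma qz_torsion_cyclic {n : ℕ} (hn : 0 < n) {u : AddCircle (1 : ℚ)}
    (hu : addOrderOf u = n) {v : AddCircle (1 : ℚ)} (hv : n • v = 0) :
    ∃ a : ℤ, v = a • u := by
  set w : AddCircle (1 : ℚ) := ((((n : ℚ)⁻¹ : ℚ)) : AddCircle (1 : ℚ)) with hw
  have hwo : addOrderOf w = n := qz_w_order hn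
  have hwf : IsOfFinAddOrder w := by
    rw [← addOrderOf_pos_iff, hwo]; exact hn
  haveI : Finite ↥(AddSubgroup.zmultiples w) := hwf.finite_zmultiples.to_subtype
  have hun : n • u = 0 := by rw [← hu]; exact addOrderOf_nsmul_eq_zero u
  obtain ⟨m, hm⟩ := qz_torsion_mem hn hun
  have hle : AddSubgroup.zmultiples u ≤ AddSubgroup.zmultiples w := by
    rw [AddSubgroup.zmultiples_le]
    exact ⟨m, hm.symm⟩
  have hcard : AddSubgroup.zmultiples u = AddSubgroup.zmultiples w := by
    apply AddSubgroup.eq_of_le_of_card_ge hle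
    rw [Nat.card_zmultiples, Nat.card_zmultiples, hu, hwo]
  have hwmem : w ∈ AddSubgroup.zmultiples u := by
    rw [hcard]; exact AddSubgroup.mem_zmultiples w
  obtain ⟨a, ha⟩ := hwmem
  obtain ⟨k, hk⟩ := qz_torsion_mem hn hv
  exact ⟨k * a, by rw [hk, ← hw, ← ha, mul_zsmul]⟩

universe u

theorem sha_aux : ∀ (N : ℕ) (G : Type u) [AddCommGroup G] [Finite G]
    (e : G → G → AddCircle (1 : ℚ)),
    (∀ x y z : G, e (x + y) z = e x z + e y z) →
    (∀ x y z : G, e x (y + z) = e x y + e x z) →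
    (∀ x : G, e x x = 0) →
    (∀ x : G, (∀ y : G, e x y = 0) → x = 0) →
    Nat.card G ≤ N → ∃ n : ℕ, Nat.card G = n ^ 2 := by
  intro N
  induction N with
  | zero =>
    intro G _ _ e _ _ _ _ hle
    have := Nat.card_pos (α := G)
    omega
  | succ N ih =>
    intro G _ _ e hL hR hALT hND hle
    by_cases hcard : Nat.card G = 1
    · exact ⟨1, by simpa using hcard⟩
    have hnt : Nontrivial G := Finite.one_lt_card_iff_nontrivial.mp
      (by have := Nat.card_pos (α := G); omega)
    -- bilinearity helpers
    have hsm_r : ∀ (a : ℤ) (x y : G), e x (a • y) = a • e x y := by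
      intro a x y
      exact map_zsmul (AddMonoidHom.mk' (e x) (fun u v => hR x u v)) a y
    have hsm_l : ∀ (a : ℤ) (x y : G), e (a • x) y = a • e x y := by
      intro a x y
      exact map_zsmul (AddMonoidHom.mk' (fun u => e u y) (fun u v => hL u v y)) a x
    have hnsm_r : ∀ (a : ℕ) (x y : G), e x (a • y) = a • e x y := by
      intro a x y
      have := hsm_r (a : ℤ) x y
      simpa [natCast_zsmul] using this
    have hnsm_l : ∀ (a : ℕ) (x y : G), e (a • x) y = a • e x y := by
      intro a x y
      have := hsm_l (a : ℤ) x y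
      simpa [natCast_zsmul] using this
    have hz_r : ∀ x : G, e x 0 = 0 := by
      intro x
      have := hnsm_r 0 x 0
      simpa using this
    have hz_l : ∀ y : G, e 0 y = 0 := by
      intro y
      have := hnsm_l 0 0 y
      simpa using this
    have hanti : ∀ x y : G, e y x = - e x y := by
      intro x y
      have h := hALT (x + y)
      rw [hL, hR, hR, hALT, hALT] at h
      simp only [zero_add, add_zero] at h
      exact eq_neg_of_add_eq_zero_right h
    -- exponent
    set n := AddMonoid.exponent G with hndef
    have hn0 : n ≠ 0 := AddMonoid.exponent_ne_zero_of_finite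
    have hn1 : 1 < n := AddMonoid.one_lt_exponent
    have hnpos : 0 < n := by omega
    haveI : NeZero n := ⟨hn0⟩
    have hkill : ∀ g : G, n • g = 0 := fun g => AddMonoid.exponent_nsmul_eq_zero g
    obtain ⟨x, hx⟩ := AddMonoid.exists_addOrderOf_eq_exponent
      (AddMonoid.ExponentExists.of_finite (G := G))
    rw [← hndef] at hx
    -- all pairings with x are n-torsion multiples of w
    set w : AddCircle (1 : ℚ) := ((((n : ℚ)⁻¹ : ℚ)) : AddCircle (1 : ℚ)) with hwdef
    have htors : ∀ (g g' : G), n • e g g' = 0 := by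
      intro g g'
      rw [← hnsm_l, hkill g, hz_l]
    -- the subgroup of coefficients
    set T : AddSubgroup ℤ :=
      { carrier := {c : ℤ | ∃ y : G, e x y = c • w}
        zero_mem' := ⟨0, by rw [hz_r]; simp⟩
        add_mem' := by
          rintro a b ⟨y1, h1⟩ ⟨y2, h2⟩
          exact ⟨y1 + y2, by rw [hR, h1, h2, add_zsmul]⟩
        neg_mem' := by
          rintro a ⟨y1, h1⟩
          refine ⟨-y1, ?_⟩
          have : e x (-y1) = - e x y1 := by
            have := hsm_r (-1) x y1
            simpa using this
          rw [this, h1, neg_zsmul] } with hTdef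
    obtain ⟨g0, hT⟩ := Int.subgroup_cyclic T
    have hmemT : ∀ c : ℤ, c ∈ T ↔ ∃ t : ℤ, t • g0 = c := by
      intro c
      rw [hT, AddSubgroup.mem_closure_singleton]
    obtain ⟨y, hy0⟩ : ∃ y : G, e x y = g0 • w := by
      have : g0 ∈ T := (hmemT g0).mpr ⟨1, one_smul _ _⟩
      exact this
    set ε := e x y with hεdef
    have hεtor : n • ε = 0 := htors x y
    set d := addOrderOf ε with hddef
    have hdn : d ∣ n := addOrderOf_dvd_of_nsmul_eq_zero hεtor
    have hnd : n ∣ d := by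
      have hall : ∀ y' : G, d • e x y' = 0 := by
        intro y'
        obtain ⟨c, hc⟩ := qz_torsion_mem hnpos (htors x y')
        obtain ⟨t, ht⟩ := (hmemT c).mp ⟨y', hc⟩
        have hdε : d • ε = 0 := addOrderOf_nsmul_eq_zero ε
        rw [hc, ← ht, smul_eq_mul, mul_zsmul, ← hy0,
          ← natCast_zsmul, smul_comm ((d : ℤ)) t ε, natCast_zsmul, hdε, smul_zero]
      have : d • x = 0 := by
        apply hND
        intro y'
        rw [hnsm_l]
        exact hall y'
      have := addOrderOf_dvd_of_nsmul_eq_zero this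
      rwa [hx] at this
    have hεord : addOrderOf ε = n := Nat.dvd_antisymm hdn hnd
    have hyord : addOrderOf y = n := by
      apply Nat.dvd_antisymm
      · rw [hndef]; exact AddMonoid.addOrder_dvd_exponent y
      · rw [← hεord]
        apply addOrderOf_dvd_of_nsmul_eq_zero
        rw [hεdef, ← hnsm_r, addOrderOf_nsmul_eq_zero, hz_r]
    have htorε : ∀ v : AddCircle (1 : ℚ), n • v = 0 → ∃ a : ℤ, v = a • ε :=
      fun v hv => qz_torsion_cyclic hnpos hεord hv
    -- subtraction helpers
    have hsub_l : ∀ u v z : G, e (u - v) z = e u z - e v z := by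
      intro u v z
      have h1 : e (-v) z = - e v z := by simpa using hsm_l (-1) v z
      rw [sub_eq_add_neg, hL, h1, sub_eq_add_neg]
    -- decomposition
    have decomp : ∀ g : G, ∃ (a b : ℤ) (k : G),
        e k x = 0 ∧ e k y = 0 ∧ g = a • x + b • y + k := by
      intro g
      obtain ⟨a, ha⟩ := htorε (e g y) (htors g y)
      obtain ⟨b, hb⟩ := htorε (e x g) (htors x g)
      refine ⟨a, b, g - a • x - b • y, ?_, ?_, by abel⟩
      · rw [hsub_l, hsub_l, hsm_l, hsm_l, hALT, hanti x y, ← hεdef, smul_zero,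
          hanti x g, hb]
        simp [smul_neg]
      · rw [hsub_l, hsub_l, hsm_l, hsm_l, hALT, ← hεdef, smul_zero, ha]
        simp
    -- the orthogonal complement K
    set K : AddSubgroup G :=
      { carrier := {g : G | e g x = 0 ∧ e g y = 0}
        zero_mem' := ⟨hz_l x, hz_l y⟩
        add_mem' := by
          rintro a b ⟨h1, h2⟩ ⟨h3, h4⟩
          exact ⟨by rw [hL, h1, h3, add_zero], by rw [hL, h2, h4, add_zero]⟩
        neg_mem' := by
          rintro a ⟨h1, h2⟩
          have hn1' : ∀ z : G, e (-a) z = - e a z := fun z => by simpa using hsm_l (-1) a z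
          exact ⟨by rw [hn1' x, h1, neg_zero], by rw [hn1' y, h2, neg_zero]⟩ } with hKdef
    -- reduction of integer coefficients mod n
    have hval : ∀ (a : ℤ) (g : G), addOrderOf g = n →
        (((a : ZMod n)).val : ℤ) • g = a • g := by
      intro a g hg
      have hdvd : (n : ℤ) ∣ (((a : ZMod n)).val : ℤ) - a := by
        rw [← ZMod.intCast_zmod_eq_zero_iff_dvd]
        push_cast
        simp [ZMod.natCast_val, ZMod.intCast_cast, ZMod.cast_id]
      obtain ⟨t, ht⟩ := hdvd
      have hng : (n : ℤ) • g = 0 := by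
        rw [natCast_zsmul, ← hg]
        exact addOrderOf_nsmul_eq_zero g
      have heq : (((a : ZMod n)).val : ℤ) = a + t * n := by
        rw [mul_comm] at ht; omega
      rw [heq, add_zsmul, mul_zsmul, hng, smul_zero, add_zero]
    -- the bijection
    set Φ : ZMod n × ZMod n × K → G :=
      fun t => (t.1.val : ℤ) • x + (t.2.1.val : ℤ) • y + (t.2.2 : G) with hΦdef
    have hΦy : ∀ t : ZMod n × ZMod n × K, e (Φ t) y = (t.1.val : ℤ) • ε := by
      intro t
      rw [hΦdef]
      simp only
      rw [hL, hL, hsm_l, hsm_l, ← hεdef, hALT, smul_zero, t.2.2.2.2, add_zero, add_zero]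
    have hΦx : ∀ t : ZMod n × ZMod n × K, e x (Φ t) = (t.2.1.val : ℤ) • ε := by
      intro t
      rw [hΦdef]
      simp only
      rw [hR, hR, hsm_r, hsm_r, ← hεdef, hALT, smul_zero, zero_add]
      have : e x (t.2.2 : G) = 0 := by
        rw [hanti]
        rw [t.2.2.2.1, neg_zero]
      rw [this, add_zero]
    have hvalinj : ∀ a b : ZMod n, (a.val : ℤ) • ε = (b.val : ℤ) • ε → a = b := by
      intro a b hab
      have h0 : ((a.val : ℤ) - (b.val : ℤ)) • ε = 0 := by
        rw [sub_zsmul, hab]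
        simp
      have hdvd : ((addOrderOf ε : ℕ) : ℤ) ∣ (a.val : ℤ) - (b.val : ℤ) :=
        addOrderOf_dvd_iff_zsmul_eq_zero.mpr h0
      rw [hεord] at hdvd
      have hav : ((a.val : ℤ)) < n := by exact_mod_cast a.val_lt
      have hbv : ((b.val : ℤ)) < n := by exact_mod_cast b.val_lt
      have haz : (0 : ℤ) ≤ (a.val : ℤ) := Int.natCast_nonneg _
      have hbz : (0 : ℤ) ≤ (b.val : ℤ) := Int.natCast_nonneg _
      have h0' : (a.val : ℤ) - (b.val : ℤ) = 0 :=
        Int.eq_zero_of_abs_lt_dvd hdvd (abs_sub_lt_iff.2 ⟨by omega, by omega⟩)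
      have : a.val = b.val := by omega
      calc a = (a.val : ZMod n) := (ZMod.natCast_rightInverse a).symm
        _ = (b.val : ZMod n) := by rw [this]
        _ = b := ZMod.natCast_rightInverse b
    have hΦbij : Function.Bijective Φ := by
      constructor
      · rintro ⟨a1, b1, k1⟩ ⟨a2, b2, k2⟩ h
        have ha : a1 = a2 := by
          apply hvalinj
          rw [← hΦy ⟨a1, b1, k1⟩, ← hΦy ⟨a2, b2, k2⟩, h]
        have hb : b1 = b2 := by
          apply hvalinj
          rw [← hΦx ⟨a1, b1, k1⟩, ← hΦx ⟨a2, b2, k2⟩, h]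
        subst ha; subst hb
        have : (k1 : G) = k2 := by
          have := h
          rw [hΦdef] at this
          simp only at this
          exact add_left_cancel this
        exact Prod.ext rfl (Prod.ext rfl (Subtype.ext this))
      · intro g
        obtain ⟨a, b, k, hk1, hk2, hg⟩ := decomp g
        refine ⟨⟨(a : ZMod n), (b : ZMod n), ⟨k, hk1, hk2⟩⟩, ?_⟩
        rw [hΦdef]
        simp only
        rw [hval a x hx, hval b y hyord, hg]
    have hcards : Nat.card G = n * (n * Nat.card K) := by
      rw [← Nat.card_eq_of_bijective Φ hΦbij, Nat.card_prod, Nat.card_prod, Nat.card_zmod]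
    have hKpos : 0 < Nat.card K := Nat.card_pos
    have hKle : Nat.card K ≤ N := by
      have h2n : 2 ≤ n := hn1
      have h4 : 2 * (2 * Nat.card K) ≤ n * (n * Nat.card K) :=
        Nat.mul_le_mul h2n (Nat.mul_le_mul h2n le_rfl)
      omega
    -- restricted pairing on K
    obtain ⟨m, hm⟩ := ih K (fun k k' => e k k')
      (fun a b c => by simpa using hL a b c)
      (fun a b c => by simpa using hR a b c)
      (fun a => hALT a)
      (by
        rintro ⟨k, hk1, hk2⟩ hall
        apply Subtype.ext
        simp only [ZeroMemClass.coe_zero]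
        apply hND
        intro g
        obtain ⟨a, b, k', h1, h2, hg⟩ := decomp g
        rw [hg, hR, hR, hsm_r, hsm_r, hk1, hk2, smul_zero, smul_zero,
          add_zero, zero_add]
        exact hall ⟨k', h1, h2⟩)
      hKle
    exact ⟨n * m, by rw [hcards, hm]; ring⟩


theorem sha_square_order
    (G : Type*) [AddCommGroup G] [Finite G]
    (e : G → G → AddCircle (1 : ℚ))
    (h_add_left : ∀ x y z : G, e (x + y) z = e x z + e y z)
    (h_add_right : ∀ x y z : G, e x (y + z) = e x y + e x z)
    (h_alt : ∀ x : G, e x x = 0)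
    (h_nondeg : ∀ x : G, (∀ y : G, e x y = 0) → x = 0) :
    ∃ n : ℕ, Nat.card G = n ^ 2 := by
  exact sha_aux (Nat.card G) G e h_add_left h_add_right h_alt h_nondeg le_rfl
end

section
/- Let K be an algebraically closed field of characteristic different from a prime p, and let n₁, …, n_e be integers with at least one n_i coprime to p. Define N : (K^×)^e → K^× by N(α) = ∏ᵢ αᵢ^{nᵢ} and ∂ : (K^×)^e → (K^×)^e × K^× by ∂(α) = ((α₁^p, …, α_e^p), N(α)). Then the image of ∂ equals the set {(β, s) ∈ (K^×)^e × K^× : N(β) = s^p}. -/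
theorem image_of_partial_eq_norm_compatible_pairs
    (p : ℕ) (hp : p.Prime)
    (K : Type*) [Field K] [IsAlgClosed K] (hchar : (p : K) ≠ 0)
    (e : ℕ) (n : Fin e → ℤ)
    (hcoprime : ∃ i : Fin e, IsCoprime (n i) (p : ℤ)) :
    ∀ (β : Fin e → Kˣ) (s : Kˣ),
      (∃ α : Fin e → Kˣ, (∀ i, α i ^ (p : ℕ) = β i) ∧ (∏ i, α i ^ (n i)) = s) ↔
        (∏ i, β i ^ (n i)) = s ^ (p : ℕ) := by
  intro β s
  have hp0 : 0 < p := hp.pos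
  have key : ∀ γ : Fin e → Kˣ, (∏ i, (γ i ^ (p : ℕ)) ^ n i) = (∏ i, γ i ^ n i) ^ (p : ℕ) := by
    intro γ
    rw [← Finset.prod_pow]
    refine Finset.prod_congr rfl fun i _ => ?_
    rw [← zpow_natCast (γ i), ← zpow_mul, mul_comm, zpow_mul, zpow_natCast]
  constructor
  · rintro ⟨α, hα, hN⟩
    subst hN
    calc ∏ i, β i ^ n i = ∏ i, (α i ^ (p : ℕ)) ^ n i := by
          refine Finset.prod_congr rfl fun i _ => ?_; rw [hα i]
      _ = (∏ i, α i ^ n i) ^ (p : ℕ) := key α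
  · intro hβs
    obtain ⟨i₀, hco⟩ := hcoprime
    have hroot : ∀ i, ∃ γ : Kˣ, γ ^ (p : ℕ) = β i := by
      intro i
      obtain ⟨z, hz⟩ := IsAlgClosed.exists_pow_nat_eq ((β i : K)) hp0
      have hz0 : z ≠ 0 := by
        intro h
        rw [h, zero_pow hp0.ne'] at hz
        exact (β i).ne_zero hz.symm
      exact ⟨Units.mk0 z hz0, by ext; simpa using hz⟩
    choose γ hγ using hroot
    set ζ : Kˣ := s / ∏ i, γ i ^ n i with hζdef
    have hprod : (∏ i, γ i ^ n i) ^ (p : ℕ) = s ^ (p : ℕ) := by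
      rw [← key γ, ← hβs]
      exact Finset.prod_congr rfl fun i _ => by rw [hγ i]
    have hζp : ζ ^ (p : ℕ) = 1 := by
      rw [hζdef, div_pow, hprod, div_self']
    obtain ⟨a, b, hab⟩ := hco
    set ω : Kˣ := ζ ^ a with hωdef
    have hωp : ω ^ (p : ℕ) = 1 := by
      rw [hωdef, ← zpow_natCast, ← zpow_mul, mul_comm, zpow_mul, zpow_natCast, hζp, one_zpow]
    have hzbp : ζ ^ (b * (p : ℤ)) = 1 := by
      rw [mul_comm, zpow_mul, zpow_natCast, hζp, one_zpow]
    have hωn : ω ^ n i₀ = ζ := by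
      rw [hωdef, ← zpow_mul]
      have h1 : a * n i₀ = 1 - b * p := by linarith [hab]
      rw [h1, zpow_sub, hzbp, zpow_one]; simp
    refine ⟨fun i => if i = i₀ then γ i₀ * ω else γ i, fun i => ?_, ?_⟩
    · by_cases h : i = i₀
      · subst h; simp [mul_pow, hωp, hγ]
      · simp [h, hγ]
    · have : ∀ i, (if i = i₀ then γ i₀ * ω else γ i) ^ n i
          = γ i ^ n i * (if i = i₀ then ω ^ n i₀ else 1) := by
        intro i
        by_cases h : i = i₀
        · subst h; rw [if_pos rfl, if_pos rfl, mul_zpow]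
        · simp [h]
      rw [Finset.prod_congr rfl fun i _ => this i, Finset.prod_mul_distrib,
        Finset.prod_ite_eq' Finset.univ i₀ (fun _ => ω ^ n i₀), if_pos (Finset.mem_univ i₀),
        hωn, hζdef, mul_div_cancel]
end
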